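/- Let n ∈ ℕ, let χ̂ ∈ {l,r}^{2n} satisfy χ̂(2i−1) = χ̂(2i) for all i, and let 0̂ denote the interval partition {{2i−1, 2i} : i = 1,…,n}. For a bi-non-crossing partition τ ∈ BNC(χ̂), the following are equivalent: (i) τ ∨ 0̂ = 1 (the join in the lattice BNC(χ̂) is the one-block partition) and every block of τ has even cardinality; (ii) s_χ̂(1) and s_χ̂(2n) lie in the same block of τ, and s_χ̂(2i) and s_χ̂(2i+1) lie in the same block of τ for every i = 1,…,n−1. -/

import Mathlib

open scoped Classical

/-- Labels for left (`l`) and right (`r`) indices. -/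
inductive Side : Type
  | l | r
deriving DecidableEq

variable {n k : ℕ}

/-- The list of indices of `{0, …, n-1}`: first the indices labelled `l` in increasing
order, then the indices labelled `r` in decreasing order. -/
def sListFn (χ : Fin n → Side) : List (Fin n) :=
  ((List.finRange n).filter fun i => decide (χ i = Side.l)) ++
    (((List.finRange n).filter fun i => decide (χ i = Side.r)).reverse)

lemma sListFn_length (χ : Fin n → Side) : (sListFn χ).length = n := by
  have h : ∀ i ∈ List.finRange n,
      (decide (χ i = Side.r)) = (! decide (χ i = Side.l)) := by
    intro i _; cases hx : χ i <;> simp [hx]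
  simp only [sListFn, List.length_append, List.length_reverse]
  rw [List.filter_congr h, ← List.length_append,
    (List.filter_append_perm _ _).length_eq, List.length_finRange]

lemma sListFn_nodup (χ : Fin n → Side) : (sListFn χ).Nodup := by
  refine List.Nodup.append ((List.nodup_finRange n).filter _)
    (List.nodup_reverse.mpr ((List.nodup_finRange n).filter _)) ?_
  intro a ha hb
  rw [List.mem_reverse] at hb
  rw [List.mem_filter] at ha hb
  have h1 := of_decide_eq_true ha.2
  have h2 := of_decide_eq_true hb.2
  rw [h1] at h2; cases h2

/-- The underlying function of the permutation `s_χ`. -/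
def sFun (χ : Fin n → Side) : Fin n → Fin n :=
  fun i => (sListFn χ).get (Fin.cast (sListFn_length χ).symm i)

lemma sFun_bijective (χ : Fin n → Side) : Function.Bijective (sFun χ) := by
  have hinj : Function.Injective (sFun χ) := by
    intro a b hab
    have h := List.nodup_iff_injective_get.mp (sListFn_nodup χ) hab
    exact Fin.ext (by simpa using congrArg Fin.val h)
  exact Finite.injective_iff_bijective.mp hinj

/-- The permutation `s_χ` associated to a map `χ : {1,…,n} → {l,r}`. -/
noncomputable def sChi (χ : Fin n → Side) : Equiv.Perm (Fin n) :=
  Equiv.ofBijective (sFun χ) (sFun_bijective χ)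

/-- The action of a permutation on a partition (viewed as a setoid):
`(σ · π)` relates `x, y` iff `π` relates `σ⁻¹ x, σ⁻¹ y`. -/
def applyPerm (σ : Equiv.Perm (Fin n)) (π : Setoid (Fin n)) : Setoid (Fin n) :=
  Setoid.comap σ.symm π

/-- A partition of `{1,…,k}` (as a setoid) is non-crossing. -/
def IsNC (π : Setoid (Fin k)) : Prop :=
  ∀ a b c d : Fin k, a < b → b < c → c < d → π.r a c → π.r b d → π.r a b

/-- A partition is bi-non-crossing with respect to `χ` iff `s_χ⁻¹ · τ` is non-crossing. -/
def IsBNC (χ : Fin k → Side) (τ : Setoid (Fin k)) : Prop :=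
  IsNC (Setoid.comap (sChi χ) τ)
/-- The ordered list of elements of the block of `c : Quotient τ`, in increasing order. -/
noncomputable def blockList (τ : Setoid (Fin k)) (c : Quotient τ) : List (Fin k) :=
  (List.finRange k).filter fun i => decide (Quotient.mk τ i = c)

/-- Restrict a function on `Fin k` along a list of indices. -/
def restrictIdx {α : Type*} (l : List (Fin k)) (f : Fin k → α) : Fin l.length → α :=
  fun j => f (l.get j)

/-- A noncommutative `*`-probability space structure on a complex `*`-algebra `A`:
a unital, linear, positive functional. -/
structure NCPS (A : Type*) [Ring A] [Algebra ℂ A] [StarRing A] where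
  φ : A → ℂ
  linear : IsLinearMap ℂ φ
  unital : φ 1 = 1
  pos : ∀ a : A, 0 ≤ (φ (star a * a)).re ∧ (φ (star a * a)).im = 0

variable {A : Type*} [Ring A] [Algebra ℂ A] [StarRing A]
variable {B : Type*} [Ring B] [Algebra ℂ B] [StarRing B]

/-- `κ_{χ,τ}(a₁,…,a_k)`: the multiplicative extension of a family of bi-free cumulant
functionals `κ` over the blocks of the partition `τ` (each block read in increasing order,
with the induced `χ`). -/
noncomputable def biCumPart (κ : ∀ m : ℕ, (Fin m → Side) → (Fin m → A) → ℂ)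
    (χ : Fin k → Side) (τ : Setoid (Fin k)) (a : Fin k → A) : ℂ :=
  ∏ᶠ c : Quotient τ,
    κ (blockList τ c).length (restrictIdx (blockList τ c) χ) (restrictIdx (blockList τ c) a)

/-- `κ` is the family of bi-free cumulant functionals of `φ`: the moment–cumulant
formula holds, summing over bi-non-crossing partitions. -/
def IsBiFreeCumulant (φ : A → ℂ) (κ : ∀ m : ℕ, (Fin m → Side) → (Fin m → A) → ℂ) : Prop :=
  ∀ (k : ℕ) (χ : Fin k → Side) (a : Fin k → A),
    φ (List.ofFn a).prod = ∑ᶠ τ ∈ {τ : Setoid (Fin k) | IsBNC χ τ}, biCumPart κ χ τ a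

/-- The multiplicative extension of a family of free cumulant functionals over the blocks
of a partition. -/
noncomputable def freeCumPart (κ : ∀ m : ℕ, (Fin m → B) → ℂ)
    (π : Setoid (Fin k)) (b : Fin k → B) : ℂ :=
  ∏ᶠ c : Quotient π, κ (blockList π c).length (restrictIdx (blockList π c) b)

/-- `κ` is the family of free cumulant functionals of `ψ`: the moment–cumulant formula
holds, summing over non-crossing partitions. -/
def IsFreeCumulant (ψ : B → ℂ) (κ : ∀ m : ℕ, (Fin m → B) → ℂ) : Prop :=
  ∀ (k : ℕ) (b : Fin k → B),
    ψ (List.ofFn b).prod = ∑ᶠ π ∈ {π : Setoid (Fin k) | IsNC π}, freeCumPart κ π b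

/-- The sequence with entries in `{X, X*}` at left indices and `{Y, Y*}` at right indices,
where `ε i = true` means the `i`-th entry is starred. -/
def pairSeq (X Y : A) (χ : Fin k → Side) (ε : Fin k → Bool) : Fin k → A := fun i =>
  match χ i, ε i with
  | Side.l, false => X
  | Side.l, true => star X
  | Side.r, false => Y
  | Side.r, true => star Y

/-- A `Bool`-sequence is alternating. -/
def AltStars (g : Fin k → Bool) : Prop :=
  ∀ (i : ℕ) (h : i + 1 < k), g ⟨i + 1, h⟩ = !g ⟨i, Nat.lt_of_succ_lt h⟩

/-- The pair `(X, Y)` is bi-R-diagonal (with respect to the bi-free cumulants `κ`):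
every bi-free cumulant with left entries in `{X, X*}` and right entries in `{Y, Y*}`
vanishes if it is of odd order or if its entries fail to alternate in `*`-terms and
non-`*`-terms when read in the `χ`-order. -/
def IsBiRDiagonal (κ : ∀ m : ℕ, (Fin m → Side) → (Fin m → A) → ℂ) (X Y : A) : Prop :=
  ∀ (k : ℕ) (χ : Fin k → Side) (ε : Fin k → Bool),
    (Odd k ∨ ¬ AltStars fun i => ε (sChi χ i)) →
      κ k χ (pairSeq X Y χ ε) = 0

/-- The pairs `(X, Y)` and `(Z, W)` are `*`-bi-free: all mixed bi-free cumulants with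
entries from `{X, X*} ∪ {Z, Z*}` at left indices and `{Y, Y*} ∪ {W, W*}` at right indices
vanish. -/
def StarBiFree (κ : ∀ m : ℕ, (Fin m → Side) → (Fin m → A) → ℂ) (X Y Z W : A) : Prop :=
  ∀ (k : ℕ) (χ : Fin k → Side) (ω ε : Fin k → Bool),
    (∃ i j, ω i ≠ ω j) →
      κ k χ (fun i => if ω i then pairSeq Z W χ ε i else pairSeq X Y χ ε i) = 0

/-- `(u_l, u_r)` is a bi-Haar unitary pair with respect to `φ`: both unitaries, the
generated `*`-algebras commute, and `φ(u_lⁿ u_rᵐ) = δ_{n+m,0}` for all `n, m ∈ ℤ`. -/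
structure IsBiHaar (φ : A → ℂ) (ul ur : A) : Prop where
  mul_star_l : ul * star ul = 1
  star_mul_l : star ul * ul = 1
  mul_star_r : ur * star ur = 1
  star_mul_r : star ur * ur = 1
  comm : Commute ul ur
  comm_sl : Commute (star ul) ur
  comm_sr : Commute ul (star ur)
  comm_ss : Commute (star ul) (star ur)
  mom_pp : ∀ p q : ℕ, φ (ul ^ p * ur ^ q) = if p + q = 0 then 1 else 0
  mom_pm : ∀ p q : ℕ, φ (ul ^ p * (star ur) ^ q) = if p = q then 1 else 0
  mom_mp : ∀ p q : ℕ, φ ((star ul) ^ p * ur ^ q) = if p = q then 1 else 0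
  mom_mm : ∀ p q : ℕ, φ ((star ul) ^ p * (star ur) ^ q) = if p + q = 0 then 1 else 0

/-- `v` is a (free) Haar unitary with respect to `ψ`: `v` is a unitary and
`ψ(vⁿ) = 0` for all `n ∈ ℤ \ {0}`. -/
structure IsHaarUnitary (ψ : B → ℂ) (v : B) : Prop where
  mul_star : v * star v = 1
  star_mul : star v * v = 1
  mom_pos : ∀ m : ℕ, 0 < m → ψ (v ^ m) = 0
  mom_neg : ∀ m : ℕ, 0 < m → ψ ((star v) ^ m) = 0

/-
Since `χ̂` is constant on the pairs `{2i−1, 2i}`, the permutation `s_χ̂` maps pairs onto pairs: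
it acts on them as `s` of the labelling of the pairs. Conjugating by `s_χ̂` therefore turns the
statement into one about the non-crossing partition `π = s_χ̂⁻¹ · τ`, and condition (ii) says that
`π` joins every point `2i−1` to its cyclic successor.

Given (ii), every block of `π` is a union of these shifted pairs, hence even, and a partition above
`π` and `0̂` joins any two consecutive points, hence is `1`. Conversely, let `u = 2i−1`. If the
block of `u` has a point after `u`, the gap between `u` and the next one is a union of blocks of
`π`; otherwise the interval from the first point of the block to `u` is. Even block sizes force
this interval to be a union of pairs, so cutting `{1,…,2n}` along it gives a non-crossing
partition above `π` and `0̂`, which must be `1`: the gap is empty, or the interval is everything.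
-/

theorem List.getElem_flatMap_dup {α : Type*} (l : List α) (i : ℕ)
    (hi : i < (l.flatMap fun a => [a, a]).length) :
    (l.flatMap fun a => [a, a])[i] = l[i / 2]'(by simp at hi; omega) := by
  induction l generalizing i with
  | nil => simp at hi
  | cons a l ih =>
    match i with
    | 0 | 1 => rfl
    | i + 2 =>
      simp only [List.flatMap_cons, List.cons_append, List.nil_append,
        List.getElem_cons_succ, ih]
      simp [show (i + 2) / 2 = i / 2 + 1 by omega]

theorem List.range_two_mul (n : ℕ) :
    List.range (2 * n) = (List.range n).flatMap fun i => [2 * i, 2 * i + 1] := by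
  induction n with
  | zero => rfl
  | succ n ih =>
    rw [show 2 * (n + 1) = 2 * n + 1 + 1 by ring, List.range_succ, List.range_succ, ih,
      List.range_succ, List.flatMap_append]
    simp

theorem List.finRange_two_mul (n : ℕ) :
    List.finRange (2 * n) = (List.finRange n).flatMap fun i =>
      [⟨2 * i, by omega⟩, ⟨2 * i + 1, by omega⟩] := by
  apply List.map_injective_iff.mpr Fin.val_injective
  rw [List.map_coe_finRange_eq_range, List.range_two_mul, ← List.map_coe_finRange_eq_range,
    List.flatMap_map, List.map_flatMap]
  rfl

theorem List.flatMap_filter {α β : Type*} (l : List α) (p : α → Bool) (f : α → List β) :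
    (l.filter p).flatMap f = l.flatMap fun a => if p a then f a else [] := by
  induction l with
  | nil => rfl
  | cons a l ih => by_cases h : p a <;> simp [h, ih]

/-- `χ̂(2i−1) = χ̂(2i)` for `i = 1,…,n`, with points indexed from `0`. -/
def IsPairConstant (χ : Fin (2 * n) → Side) : Prop :=
  ∀ i : Fin n, χ ⟨2 * i.val, by omega⟩ = χ ⟨2 * i.val + 1, by omega⟩

def pairLabel (χ : Fin (2 * n) → Side) : Fin n → Side :=
  fun i => χ ⟨2 * i.val, by omega⟩

section PairConstant

variable {χ : Fin (2 * n) → Side}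

lemma IsPairConstant.map_div_two_filter_finRange (hχ : IsPairConstant χ) (c : Side) :
    ((List.finRange (2 * n)).filter fun i => decide (χ i = c)).map (fun x => x.val / 2) =
      (((List.finRange n).filter fun i => decide (pairLabel χ i = c)).map
        Fin.val).flatMap fun a => [a, a] := by
  rw [List.finRange_two_mul, List.filter_flatMap, List.map_flatMap, List.flatMap_map,
    List.flatMap_filter]
  congr 1
  funext i
  unfold pairLabel
  by_cases h : χ ⟨2 * i.val, by omega⟩ = c <;> simp [h, ← hχ i]
  omega

lemma IsPairConstant.map_div_two_sListFn (hχ : IsPairConstant χ) :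
    (sListFn χ).map (fun x => x.val / 2) =
      ((sListFn (pairLabel χ)).map Fin.val).flatMap fun a => [a, a] := by
  simp only [sListFn, List.map_append, List.map_reverse, List.flatMap_append,
    hχ.map_div_two_filter_finRange, List.flatMap_reverse]
  -- the `r`-part is read backwards, which is harmless since `[a, a].reverse` reduces to `[a, a]`
  rfl

lemma IsPairConstant.val_sChi_div_two (hχ : IsPairConstant χ) (x : Fin (2 * n)) :
    (sChi χ x).val / 2 = (sChi (pairLabel χ) ⟨x.val / 2, by omega⟩).val := by
  have hx : x.val < ((sListFn χ).map fun x => x.val / 2).length := by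
    simp [sListFn_length]
  calc (sChi χ x).val / 2 = ((sListFn χ).map fun x => x.val / 2)[x.val] := by
        simp [sChi, sFun]
    _ = _ := List.getElem_of_eq hχ.map_div_two_sListFn hx
    _ = _ := List.getElem_flatMap_dup _ _ _
    _ = _ := by simp [sChi, sFun]

lemma IsPairConstant.comap_sChi_ker_div_two (hχ : IsPairConstant χ) :
    Setoid.comap (sChi χ) (Setoid.ker fun x : Fin (2 * n) => x.val / 2) =
      Setoid.ker fun x : Fin (2 * n) => x.val / 2 := by
  ext x y
  simp only [Setoid.comap_rel, Setoid.ker_def, hχ.val_sChi_div_two, Fin.val_inj,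
    (sChi _).apply_eq_iff_eq, Fin.mk.injEq]

end PairConstant

section NonCrossing

variable {N : ℕ}

/-- `π ∨ σ = 1` in the lattice of non-crossing partitions. -/
def NCJoinEqTop (π σ : Setoid (Fin N)) : Prop :=
  ∀ ρ, IsNC ρ → π ≤ ρ → σ ≤ ρ → ρ = ⊤

lemma Setoid.le_ker_mem_of_forall {α : Type*} {π : Setoid α} {S : Set α}
    (h : ∀ y z, π.r y z → y ∈ S → z ∈ S) : π ≤ Setoid.ker (· ∈ S) :=
  fun y z hyz => propext ⟨h y z hyz, h z y (π.symm hyz)⟩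

lemma isNC_ker_mem {S : Set (Fin N)} (hS : S.OrdConnected) : IsNC (Setoid.ker (· ∈ S)) := by
  intro a b c d hab hbc hcd hac hbd
  simp only [Setoid.ker_def, eq_iff_iff] at hac hbd ⊢
  refine ⟨fun ha => hS.out ha (hac.mp ha) ⟨hab.le, hbc.le⟩, fun hb => ?_⟩
  by_contra ha
  exact ha (hac.mpr (hS.out hb (hbd.mp hb) ⟨hbc.le, hcd.le⟩))

lemma IsNC.le_ker_mem_Icc {π : Setoid (Fin N)} (hπ : IsNC π) {x m M : Fin N}
    (hm : π.r m x) (hM : π.r M x) (hmin : ∀ y, π.r y x → m ≤ y)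
    (hmax : ∀ y, π.r y x → y ≤ M) :
    π ≤ Setoid.ker (· ∈ Set.Icc m M) := by
  refine Setoid.le_ker_mem_of_forall fun y z hyz ⟨hmy, hyM⟩ => ?_
  by_cases hyx : π.r y x
  · have hzx := π.trans (π.symm hyz) hyx
    exact ⟨hmin z hzx, hmax z hzx⟩
  have hmy : m < y := lt_of_le_of_ne hmy fun h => hyx (h ▸ hm)
  have hyM : y < M := lt_of_le_of_ne hyM fun h => hyx (h ▸ hM)
  have hmM := π.trans hm (π.symm hM)
  by_contra hz
  rcases not_and_or.mp hz with hz | hz <;> rw [not_le] at hz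
  · have hzm := hπ z m y M hz hmy hyM (π.symm hyz) hmM
    exact hz.not_ge (hmin z (π.trans hzm hm))
  · have hmy' := hπ m y M z hmy hyM hz hmM hyz
    exact hyx (π.trans (π.symm hmy') hm)

lemma IsNC.le_ker_mem_Ioo {π : Setoid (Fin N)} (hπ : IsNC π) {u v : Fin N} (huv : π.r u v)
    (hgap : ∀ z, u < z → z < v → ¬ π.r u z) : π ≤ Setoid.ker (· ∈ Set.Ioo u v) := by
  refine Setoid.le_ker_mem_of_forall fun y z hyz ⟨huy, hyv⟩ => ?_
  have hyu : ¬ π.r y u := fun h => hgap y huy hyv (π.symm h)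
  by_contra hz
  rcases not_and_or.mp hz with hz | hz <;> rw [not_lt] at hz
  · rcases hz.lt_or_eq with hz | rfl
    · exact hyu (π.trans hyz (hπ z u y v hz huy hyv (π.symm hyz) huv))
    · exact hyu hyz
  · rcases hz.lt_or_eq with hz | rfl
    · exact hyu (π.symm (hπ u y v z huy hyv hz huv hyz))
    · exact hyu (π.trans hyz (π.symm huv))

lemma even_card_of_le_ker_mem {α : Type*} [Fintype α] {π : Setoid α}
    (hev : ∀ x, Even (Nat.card {y // π.r y x})) {S : Finset α}
    (hS : π ≤ Setoid.ker (· ∈ S)) : Even S.card := by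
  classical
  rw [Finset.card_eq_sum_card_fiberwise fun x hx => Finset.mem_image_of_mem (Quotient.mk π) hx]
  refine Finset.even_sum _ fun c hc => ?_
  obtain ⟨a, ha, rfl⟩ := Finset.mem_image.mp hc
  have hfiber : S.filter (fun y => Quotient.mk π y = Quotient.mk π a) =
      Finset.univ.filter fun y => π.r y a := by
    ext y
    simp only [Finset.mem_filter, Finset.mem_univ, true_and, Quotient.eq]
    exact ⟨And.right, fun hya => ⟨(eq_iff_iff.mp (hS hya)).mpr ha, hya⟩⟩
  rw [hfiber, ← Fintype.card_subtype, ← Nat.card_eq_fintype_card]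
  exact hev a

lemma NCJoinEqTop.mem_iff_mem {π σ : Setoid (Fin N)} (hjoin : NCJoinEqTop π σ)
    {S : Set (Fin N)} (hS : S.OrdConnected) (hπS : π ≤ Setoid.ker (· ∈ S))
    (hσS : σ ≤ Setoid.ker (· ∈ S)) (x y : Fin N) : x ∈ S ↔ y ∈ S := by
  have htop := hjoin _ (isNC_ker_mem hS) hπS hσS
  exact eq_iff_iff.mp (htop ▸ trivial : (Setoid.ker (· ∈ S)).r x y)

lemma ker_div_two_le_ker_mem_Icc {a b : Fin N} (ha : Even a.val) (hb : Odd b.val) :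
    Setoid.ker (fun x : Fin N => x.val / 2) ≤ Setoid.ker (· ∈ Set.Icc a b) := by
  intro x y hxy
  rw [Nat.even_iff] at ha
  rw [Nat.odd_iff] at hb
  simp only [Setoid.ker_def, Set.mem_Icc, Fin.le_def, eq_iff_iff] at hxy ⊢
  constructor <;> intro <;> omega

lemma ker_div_two_le_ker_mem_Ioo {a b : Fin N} (ha : Odd a.val) (hb : Even b.val) :
    Setoid.ker (fun x : Fin N => x.val / 2) ≤ Setoid.ker (· ∈ Set.Ioo a b) := by
  intro x y hxy
  rw [Nat.odd_iff] at ha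
  rw [Nat.even_iff] at hb
  simp only [Setoid.ker_def, Set.mem_Ioo, Fin.lt_def, eq_iff_iff] at hxy ⊢
  constructor <;> intro <;> omega

lemma val_finRotate (y : Fin N) :
    (finRotate N y).val = if y.val + 1 = N then 0 else y.val + 1 := by
  cases N with
  | zero => exact y.elim0
  | succ N => rw [coe_finRotate]; simp [Fin.ext_iff]

lemma Setoid.eq_top_of_rel_finRotate {ρ : Setoid (Fin N)} (h : ∀ y, ρ.r y (finRotate N y)) :
    ρ = ⊤ := by
  have hzero : ∀ i (hi : i < N), ρ.r ⟨0, by omega⟩ ⟨i, hi⟩ := by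
    intro i
    induction i with
    | zero => exact fun _ => ρ.refl _
    | succ i ih =>
      intro hi
      have hrot : finRotate N ⟨i, by omega⟩ = ⟨i + 1, hi⟩ := by
        ext; rw [val_finRotate, if_neg (by simp; omega)]
      exact ρ.trans (ih (by omega)) (hrot ▸ h ⟨i, by omega⟩)
  ext a b
  exact ⟨fun _ => trivial, fun _ => ρ.trans (ρ.symm (hzero a a.2)) (hzero b b.2)⟩

end NonCrossing

lemma Function.Involutive.even_natCard {α : Type*} [Finite α] {f : α → α}
    (hf : Function.Involutive f) (hne : ∀ x, f x ≠ x) : Even (Nat.card α) := by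
  classical
  have := Fintype.ofFinite α
  have hsupp : (hf.toPerm f).support = Finset.univ := by
    ext x; simp [hne x]
  rw [Nat.card_eq_fintype_card, ← Finset.card_univ, ← hsupp, even_iff_two_dvd]
  exact Equiv.Perm.two_dvd_card_support (by ext x; simp [sq, hf x])

section CyclicPairs

lemma odd_val_finRotate_iff (y : Fin (2 * n)) :
    Odd (finRotate (2 * n) y).val ↔ Even y.val := by
  rw [val_finRotate, Nat.odd_iff, Nat.even_iff]
  split_ifs
  · rw [false_iff]
    omega
  · omega

lemma ker_div_two_rel_finRotate {y : Fin (2 * n)} (hy : Even y.val) :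
    (Setoid.ker fun x : Fin (2 * n) => x.val / 2).r y (finRotate (2 * n) y) := by
  rw [Nat.even_iff] at hy
  show y.val / 2 = (finRotate (2 * n) y).val / 2
  rw [val_finRotate, if_neg (by have := y.isLt; omega)]
  omega

/-- With points indexed from `0`, this pairs `2i−1` with `2i` and `2n−1` with `0`. -/
def cyclicPartner (y : Fin (2 * n)) : Fin (2 * n) :=
  if Odd y.val then finRotate _ y else (finRotate _).symm y

lemma odd_val_cyclicPartner_iff (y : Fin (2 * n)) :
    Odd (cyclicPartner y).val ↔ Even y.val := by
  unfold cyclicPartner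
  split_ifs with hy
  · exact odd_val_finRotate_iff y
  · rw [← Nat.not_even_iff_odd, ← odd_val_finRotate_iff, Equiv.apply_symm_apply,
      Nat.not_odd_iff_even]

lemma cyclicPartner_involutive : Function.Involutive (cyclicPartner (n := n)) := by
  intro y
  by_cases hy : Odd y.val
  · have : ¬ Odd (finRotate _ y).val := by
      rw [odd_val_finRotate_iff, Nat.not_even_iff_odd]; exact hy
    simp only [cyclicPartner, hy, this, if_true, if_false, Equiv.symm_apply_apply]
  · have : Odd ((finRotate (2 * n)).symm y).val := by
      have := odd_val_cyclicPartner_iff y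
      simp only [cyclicPartner, hy, if_false] at this
      exact this.mpr (Nat.not_odd_iff_even.mp hy)
    simp only [cyclicPartner, hy, this, if_true, if_false, Equiv.apply_symm_apply]

lemma cyclicPartner_ne (y : Fin (2 * n)) : cyclicPartner y ≠ y := by
  intro h
  have := odd_val_cyclicPartner_iff y
  rw [h, Nat.odd_iff, Nat.even_iff] at this
  omega

variable {π : Setoid (Fin (2 * n))}

lemma rel_cyclicPartner (h : ∀ y : Fin (2 * n), Odd y.val → π.r y (finRotate _ y))
    (y : Fin (2 * n)) : π.r y (cyclicPartner y) := by
  by_cases hy : Odd y.val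
  · simpa [cyclicPartner, hy] using h y hy
  · have := h _ ((odd_val_cyclicPartner_iff y).mpr (Nat.not_odd_iff_even.mp hy))
    simp only [cyclicPartner, hy, if_false, Equiv.apply_symm_apply] at this ⊢
    exact π.symm this

lemma ncJoinEqTop_of_rel_finRotate_of_odd
    (h : ∀ y : Fin (2 * n), Odd y.val → π.r y (finRotate _ y)) :
    NCJoinEqTop π (Setoid.ker fun x : Fin (2 * n) => x.val / 2) :=
  fun _ _ hπρ hpairs => Setoid.eq_top_of_rel_finRotate fun y => (Nat.even_or_odd y.val).elim
    (fun hy => hpairs (ker_div_two_rel_finRotate hy)) (fun hy => hπρ (h y hy))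

lemma even_natCard_rel_of_rel_finRotate_of_odd
    (h : ∀ y : Fin (2 * n), Odd y.val → π.r y (finRotate _ y)) (x : Fin (2 * n)) :
    Even (Nat.card {y // π.r y x}) :=
  Function.Involutive.even_natCard
    (f := fun z => ⟨cyclicPartner z, π.trans (π.symm (rel_cyclicPartner h z)) z.2⟩)
    (fun z => Subtype.ext (cyclicPartner_involutive z.1))
    fun z hz => cyclicPartner_ne z.1 (Subtype.ext_iff.mp hz)

lemma IsNC.rel_finRotate_of_odd_of_exists_rel_gt (hπ : IsNC π)
    (hjoin : NCJoinEqTop π (Setoid.ker fun x : Fin (2 * n) => x.val / 2))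
    (heven : ∀ x, Even (Nat.card {y // π.r y x})) {u : Fin (2 * n)} (hu : Odd u.val)
    (hlater : ∃ w, π.r u w ∧ u < w) : π.r u (finRotate _ u) := by
  obtain ⟨v, hv, hvmin⟩ := (Finset.univ.filter fun w => π.r u w ∧ u < w).exists_min_image id
    (by obtain ⟨w, hw⟩ := hlater; exact ⟨w, by simpa using hw⟩)
  simp only [Finset.mem_filter, Finset.mem_univ, true_and, id] at hv hvmin
  obtain ⟨huv, hlt⟩ := hv
  have hsat := hπ.le_ker_mem_Ioo huv fun z huz hzv hz => (hvmin z ⟨hz, huz⟩).not_gt hzv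
  have hcard := even_card_of_le_ker_mem heven (S := Finset.Ioo u v)
    (by rwa [← Finset.coe_Ioo] at hsat)
  rw [Fin.card_Ioo, Nat.even_iff] at hcard
  rw [Fin.lt_def] at hlt
  have hv_even : Even v.val := by rw [Nat.odd_iff] at hu; rw [Nat.even_iff]; omega
  have hsucc := hjoin.mem_iff_mem Set.ordConnected_Ioo hsat
    (ker_div_two_le_ker_mem_Ioo hu hv_even) u ⟨u.val + 1, by omega⟩
  have hvu : v.val = u.val + 1 := by
    simp only [Set.mem_Ioo, lt_irrefl, false_and, false_iff, not_and, Fin.lt_def] at hsucc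
    omega
  have hrot : finRotate _ u = v := by
    ext; rw [val_finRotate, if_neg (by omega)]; omega
  exact hrot ▸ huv

lemma IsNC.rel_finRotate_of_odd_of_forall_rel_le (hπ : IsNC π)
    (hjoin : NCJoinEqTop π (Setoid.ker fun x : Fin (2 * n) => x.val / 2))
    (heven : ∀ x, Even (Nat.card {y // π.r y x})) {u : Fin (2 * n)} (hu : Odd u.val)
    (hlast : ∀ w, π.r u w → w ≤ u) : π.r u (finRotate _ u) := by
  obtain ⟨m, hm, hmmin⟩ := (Finset.univ.filter fun w => π.r w u).exists_min_image id
    ⟨u, by simp⟩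
  simp only [Finset.mem_filter, Finset.mem_univ, true_and, id] at hm hmmin
  have hsat := hπ.le_ker_mem_Icc hm (π.refl u) hmmin fun y hy => hlast y (π.symm hy)
  have hcard := even_card_of_le_ker_mem heven (S := Finset.Icc m u)
    (by rwa [← Finset.coe_Icc] at hsat)
  rw [Fin.card_Icc, Nat.even_iff] at hcard
  have hmu : m ≤ u := hmmin u (π.refl u)
  have hm_even : Even m.val := by
    rw [Nat.odd_iff] at hu; rw [Nat.even_iff]; rw [Fin.le_def] at hmu; omega
  have hsplit := hjoin.mem_iff_mem Set.ordConnected_Icc hsat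
    (ker_div_two_le_ker_mem_Icc hm_even hu) u
  have hfirst := hsplit ⟨0, by omega⟩
  have hfinal := hsplit ⟨2 * n - 1, by omega⟩
  simp only [Set.mem_Icc, le_refl, and_true, hmu, true_iff, Fin.le_def] at hfirst hfinal
  have hrot : finRotate _ u = m := by
    ext; rw [val_finRotate, if_pos (by omega)]; omega
  exact hrot ▸ π.symm hm

theorem IsNC.ncJoinEqTop_and_even_iff (hπ : IsNC π) :
    (NCJoinEqTop π (Setoid.ker fun x : Fin (2 * n) => x.val / 2) ∧
      ∀ x, Even (Nat.card {y // π.r y x})) ↔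
    ∀ y : Fin (2 * n), Odd y.val → π.r y (finRotate _ y) := by
  refine ⟨fun ⟨hjoin, heven⟩ u hu => ?_, fun h =>
    ⟨ncJoinEqTop_of_rel_finRotate_of_odd h, even_natCard_rel_of_rel_finRotate_of_odd h⟩⟩
  by_cases hlater : ∃ w, π.r u w ∧ u < w
  · exact hπ.rel_finRotate_of_odd_of_exists_rel_gt hjoin heven hu hlater
  · push Not at hlater
    exact hπ.rel_finRotate_of_odd_of_forall_rel_le hjoin heven hu hlater

lemma forall_odd_rel_finRotate_iff (hn : 0 < n) :
    (∀ y : Fin (2 * n), Odd y.val → π.r y (finRotate _ y)) ↔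
      π.r ⟨0, Nat.mul_pos two_pos hn⟩
          ⟨2 * n - 1, Nat.sub_lt (Nat.mul_pos two_pos hn) one_pos⟩ ∧
        ∀ i : Fin n, 0 < i.val → π.r ⟨2 * i.val - 1, by omega⟩ ⟨2 * i.val, by omega⟩ := by
  constructor
  · intro h
    refine ⟨π.symm ?_, fun i hi => ?_⟩
    · convert h ⟨2 * n - 1, by omega⟩ (by dsimp only; rw [Nat.odd_iff]; omega) using 1
      ext; simp only [val_finRotate]; split_ifs <;> omega
    · convert h ⟨2 * i.val - 1, by omega⟩ (by dsimp only; rw [Nat.odd_iff]; omega) using 1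
      ext; simp only [val_finRotate]; split_ifs <;> omega
  · rintro ⟨hwrap, hinner⟩ y hy
    rw [Nat.odd_iff] at hy
    by_cases hlast : y.val + 1 = 2 * n
    · convert π.symm hwrap using 1 <;> ext <;> simp only [val_finRotate, hlast, ↓reduceIte]
      omega
    · convert hinner ⟨(y.val + 1) / 2, by omega⟩ (by dsimp only; omega) using 1 <;> ext <;>
        simp only [val_finRotate, hlast, ↓reduceIte] <;> omega

end CyclicPairs

def Equiv.setoidComap {α β : Type*} (e : α ≃ β) : Setoid β ≃o Setoid α where
  toFun := Setoid.comap e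
  invFun := Setoid.comap e.symm
  left_inv ρ := Setoid.ext fun _ _ => by simp only [Setoid.comap_rel, Equiv.apply_symm_apply]
  right_inv ρ := Setoid.ext fun _ _ => by simp only [Setoid.comap_rel, Equiv.symm_apply_apply]
  map_rel_iff' {ρ₁ ρ₂} := by
    refine ⟨fun h x y hxy => ?_, fun h _ _ hxy => h hxy⟩
    have h' : Setoid.comap e ρ₁ ≤ Setoid.comap e ρ₂ := h
    simpa [Setoid.comap_rel] using
      h' (x := e.symm x) (y := e.symm y) (by simpa [Setoid.comap_rel] using hxy)

lemma Setoid.forall_comap_eq_top_iff {α : Type*} (s : Equiv.Perm α) (P : Setoid α → Prop)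
    {τ σ : Setoid α} (hσ : Setoid.comap s σ = σ) :
    (∀ ρ, P (Setoid.comap s ρ) → τ ≤ ρ → σ ≤ ρ → ρ = ⊤) ↔
      ∀ ρ, P ρ → Setoid.comap s τ ≤ ρ → σ ≤ ρ → ρ = ⊤ := by
  let Φ := Equiv.setoidComap s
  symm
  rw [Φ.surjective.forall]
  refine forall_congr' fun ρ => ?_
  have hτ : Setoid.comap s τ ≤ Φ ρ ↔ τ ≤ ρ := Φ.le_iff_le
  have hσ' : σ ≤ Φ ρ ↔ σ ≤ ρ := by
    conv_lhs => rw [← hσ]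
    exact Φ.le_iff_le
  rw [hτ, hσ', map_eq_top_iff]
  rfl

lemma Setoid.forall_even_natCard_comap_iff {α : Type*} (s : Equiv.Perm α) (τ : Setoid α) :
    (∀ x, Even (Nat.card {y // τ.r y x})) ↔
      ∀ x, Even (Nat.card {y // (Setoid.comap s τ).r y x}) := by
  rw [← s.forall_congr_right]
  refine forall_congr' fun x => ?_
  rw [Nat.card_congr (s.subtypeEquiv (p := fun y => (Setoid.comap s τ).r y x)
    (q := fun y => τ.r y (s x)) fun _ => Iff.rfl)]

/-- for `χ̂ ∈ {l,r}^{2n}` with `χ̂(2i−1) = χ̂(2i)` and the interval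
partition `0̂` into consecutive pairs, a bi-non-crossing partition `τ` satisfies
`τ ∨ 0̂ = 1_χ̂` in `BNC(χ̂)` with all blocks of even cardinality iff `s_χ̂(1) ∼ s_χ̂(2n)`
and `s_χ̂(2i) ∼ s_χ̂(2i+1)` for `i = 1,…,n−1`. -/
theorem join_pairs_eq_top_iff (n : ℕ) (hn : 0 < n) (χ : Fin (2 * n) → Side)
    (hχ : ∀ i : Fin n, χ ⟨2 * i.val, by have := i.isLt; omega⟩
      = χ ⟨2 * i.val + 1, by have := i.isLt; omega⟩)
    (τ : Setoid (Fin (2 * n))) (hτ : IsBNC χ τ) :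
    ((∀ ρ : Setoid (Fin (2 * n)), IsBNC χ ρ → τ ≤ ρ →
        Setoid.ker (fun x : Fin (2 * n) => x.val / 2) ≤ ρ → ρ = ⊤) ∧
      ∀ x : Fin (2 * n), Even (Nat.card {y : Fin (2 * n) // τ.r y x})) ↔
    (τ.r (sChi χ ⟨0, by omega⟩) (sChi χ ⟨2 * n - 1, by omega⟩) ∧
      ∀ i : Fin n, 0 < i.val →
        τ.r (sChi χ ⟨2 * i.val - 1, by have := i.isLt; omega⟩)
          (sChi χ ⟨2 * i.val, by have := i.isLt; omega⟩)) := by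
  calc _ ↔ _ := and_congr
          (Setoid.forall_comap_eq_top_iff (sChi χ) IsNC
            (IsPairConstant.comap_sChi_ker_div_two (χ := χ) hχ))
          (Setoid.forall_even_natCard_comap_iff (sChi χ) τ)
    _ ↔ _ := IsNC.ncJoinEqTop_and_even_iff hτ
    _ ↔ _ := forall_odd_rel_finRotate_iff hn
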